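/- Let α be an irrational real number, and let R = ℂ[x1, x2, x3] be the polynomial ring in three variables over ℂ, equipped with a Poisson bracket satisfying {x1,x2} = x2, {x1,x3} = α·x3, and {x2,x3} = 0. Then the Poisson cores of the maximal ideals of R are as follows: P(⟨x1 − a, x2, x3⟩) = ⟨x1 − a, x2, x3⟩ for all a ∈ ℂ; P(⟨x1 − a, x2 − b, x3⟩) = ⟨x3⟩ for all a ∈ ℂ and b ∈ ℂ \ {0}; P(⟨x1 − a, x2, x3 − c⟩) = ⟨x2⟩ for all a ∈ ℂ and c ∈ ℂ \ {0}; and P(⟨x1 − a, x2 − b, x3 − c⟩) = ⟨0⟩ for all a ∈ ℂ and b, c ∈ ℂ \ {0}. -/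

import Mathlib

/-- A Poisson bracket on a commutative `k`-algebra `R`: a `k`-bilinear,
antisymmetric map satisfying the Jacobi and Leibniz identities. -/
structure PoissonBracket (k : Type*) (R : Type*) [CommRing k] [CommRing R] [Algebra k R] where
  bracket : R → R → R
  add_left : ∀ a b c : R, bracket (a + b) c = bracket a c + bracket b c
  add_right : ∀ a b c : R, bracket a (b + c) = bracket a b + bracket a c
  smul_left : ∀ (t : k) (a b : R), bracket (t • a) b = t • bracket a b
  smul_right : ∀ (t : k) (a b : R), bracket a (t • b) = t • bracket a b
  antisymm : ∀ a b : R, bracket a b = - bracket b a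
  jacobi : ∀ a b c : R,
    bracket a (bracket b c) + bracket b (bracket c a) + bracket c (bracket a b) = 0
  leibniz : ∀ a b c : R, bracket a (b * c) = bracket a b * c + b * bracket a c

/-- An ideal `I` is a Poisson ideal if `{R, I} ⊆ I`. -/
def IsPoissonIdeal {k R : Type*} [CommRing k] [CommRing R] [Algebra k R]
    (B : PoissonBracket k R) (I : Ideal R) : Prop :=
  ∀ a : R, ∀ x ∈ I, B.bracket a x ∈ I

/-- The Poisson core of an ideal `J`: the largest Poisson ideal contained in `J`,
i.e. the sum of all Poisson ideals contained in `J`. -/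
def poissonCore {k R : Type*} [CommRing k] [CommRing R] [Algebra k R]
    (B : PoissonBracket k R) (J : Ideal R) : Ideal R :=
  sSup {I : Ideal R | IsPoissonIdeal B I ∧ I ≤ J}

/-- A Poisson-primitive ideal: the Poisson core of some maximal ideal. -/
def IsPoissonPrimitive {k R : Type*} [CommRing k] [CommRing R] [Algebra k R]
    (B : PoissonBracket k R) (P : Ideal R) : Prop :=
  ∃ m : Ideal R, m.IsMaximal ∧ poissonCore B m = P

/-!
Variables are indexed from `0`, so the paper's `x₁, x₂, x₃` are `x₀, x₁, x₂` here.
The Hamiltonian derivation `{x₀, -} = x₁ ∂₁ + α x₂ ∂₂` multiplies `x₀ᵉ x₁ʲ x₂ᵏ` by `j + α k`.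
Since `α` is irrational these eigenvalues separate the bidegrees in `(x₁, x₂)`, so by Lagrange
interpolation in this operator a Poisson ideal contains every bidegree component
`x₁ʲ x₂ᵏ P(x₀)` of each of its elements. Applying `{x_t, -} = -c x_t ∂₀` (`t = 1, 2`,
`c ∈ {1, α}`) `deg P` times then puts the monomial `x₁ʲ x₂ᵏ x_tⁿ` into the ideal. Hence if a
Poisson ideal lies in the maximal ideal of a point `p`, then `x₁ʲ x₂ᵏ` vanishes at `p` for every
monomial `x₀ᵉ x₁ʲ x₂ᵏ` of its elements, while `⟨x₁⟩`, `⟨x₂⟩` and `⟨x₀ - a, x₁, x₂⟩` are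
Poisson ideals.
-/

namespace PoissonBracket

variable {k R : Type*} [CommRing k] [CommRing R] [Algebra k R] (B : PoissonBracket k R)

theorem bracket_one_right (a : R) : B.bracket a 1 = 0 := by
  have h := B.leibniz a 1 1
  rw [mul_one, one_mul, mul_one] at h
  exact left_eq_add.mp h

theorem bracket_self [Invertible (2 : k)] (a : R) : B.bracket a a = 0 := by
  have h : (2 : k) • B.bracket a a = 0 := by
    rw [two_smul]
    nth_rw 2 [B.antisymm]
    exact add_neg_cancel _
  simpa using congrArg ((⅟2 : k) • ·) h

def hamiltonian (a : R) : Derivation k R R where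
  toFun := B.bracket a
  map_add' := B.add_right a
  map_smul' t b := B.smul_right t a b
  map_one_eq_zero' := B.bracket_one_right a
  leibniz' b c := by
    simp only [LinearMap.coe_mk, AddHom.coe_mk, smul_eq_mul, B.leibniz]
    ring

@[simp]
theorem hamiltonian_apply (a b : R) : B.hamiltonian a b = B.bracket a b := rfl

end PoissonBracket

section PoissonCore

variable {k R : Type*} [CommRing k] [CommRing R] [Algebra k R] {B : PoissonBracket k R}

theorem isPoissonIdeal_bot : IsPoissonIdeal B ⊥ := by
  rintro a x rfl
  exact (B.hamiltonian a).map_zero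

theorem poissonCore_eq_of_forall_le {J K : Ideal R} (hK : IsPoissonIdeal B K) (hKJ : K ≤ J)
    (h : ∀ I, IsPoissonIdeal B I → I ≤ J → I ≤ K) : poissonCore B J = K :=
  le_antisymm (sSup_le fun I hI => h I hI.1 hI.2) (le_sSup ⟨hK, hKJ⟩)

theorem poissonCore_eq_self {J : Ideal R} (hJ : IsPoissonIdeal B J) : poissonCore B J = J :=
  poissonCore_eq_of_forall_le hJ le_rfl fun _ _ h => h

end PoissonCore

open Polynomial in
theorem Submodule.mem_of_sum_mem_of_apply_eq_smul {K V ι : Type*} [Field K] [AddCommGroup V]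
    [Module K V] [DecidableEq ι] {T : Module.End K V} {p : Submodule K V}
    (hp : ∀ x ∈ p, T x ∈ p) {s : Finset ι} {μ : ι → K} (hμ : Set.InjOn μ s) {v : ι → V}
    (hv : ∀ i ∈ s, T (v i) = μ i • v i) (hsum : ∑ i ∈ s, v i ∈ p) {i : ι} (hi : i ∈ s) :
    v i ∈ p := by
  have hp_aeval (P : K[X]) : ∀ x ∈ p, aeval T P x ∈ p := by
    induction P using Polynomial.induction_on with
    | C c => intro x hx; simpa using p.smul_mem c hx
    | add P Q hP hQ => intro x hx; simpa using add_mem (hP x hx) (hQ x hx)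
    | monomial n c ih =>
      intro x hx
      rw [pow_succ, ← mul_assoc, map_mul, Module.End.mul_apply, aeval_X]
      exact ih _ (hp x hx)
  -- The Lagrange basis polynomial at `μ i` projects onto the `i`-th eigenvector.
  have hproj : aeval T (Lagrange.basis s μ i) (∑ j ∈ s, v j) = v i := by
    rw [map_sum, Finset.sum_eq_single i]
    · rw [Module.End.aeval_apply_of_mem_apply_eq_smul (hv i hi),
        Lagrange.eval_basis_self hμ hi, one_smul]
    · intro j hj hji
      rw [Module.End.aeval_apply_of_mem_apply_eq_smul (hv j hj),
        Lagrange.eval_basis_of_ne hji.symm hj, zero_smul]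
    · exact fun h => absurd hi h
  exact hproj ▸ hp_aeval _ _ hsum

open MvPolynomial

namespace MvPolynomial

variable {σ : Type*}

theorem derivation_eq_sum_pderiv {R : Type*} [CommSemiring R] [Fintype σ]
    (D : Derivation R (MvPolynomial σ R) (MvPolynomial σ R)) (f : MvPolynomial σ R) :
    D f = ∑ i, D (X i) * pderiv i f := by
  classical
  induction f using MvPolynomial.induction_on with
  | C a => simp [derivation_C]
  | add p q hp hq => simp only [map_add, hp, hq, mul_add, Finset.sum_add_distrib]
  | mul_X p j hp =>
    simp only [Derivation.leibniz, smul_eq_mul, hp, Finset.mul_sum, pderiv_X, Pi.single_apply,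
      mul_ite, mul_one, mul_zero, mul_add, Finset.sum_add_distrib, Finset.sum_ite_eq,
      Finset.mem_univ, ↓reduceIte]
    rw [mul_comm]
    exact congrArg _ (Finset.sum_congr rfl fun _ _ => by ring)

theorem X_mul_pderiv_eq_nsmul {R : Type*} [CommSemiring R] {g : MvPolynomial σ R}
    {i : σ} {n : ℕ} (h : ∀ s ∈ g.support, s i = n) : X i * pderiv i g = n • g := by
  conv_lhs => rw [g.as_sum]
  conv_rhs => rw [g.as_sum]
  rw [map_sum, Finset.mul_sum, Finset.smul_sum]
  exact Finset.sum_congr rfl fun s hs => by rw [X_mul_pderiv_monomial, h s hs]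

open Polynomial (derivative)

theorem exists_eq_monomial_mul_aeval {R : Type*} [CommSemiring R] {g : MvPolynomial σ R}
    {i : σ} {μ : σ →₀ ℕ} (h : ∀ s ∈ g.support, s.erase i = μ) :
    ∃ P : Polynomial R, g = monomial μ 1 * Polynomial.aeval (X i) P := by
  refine ⟨∑ s ∈ g.support, Polynomial.monomial (s i) (coeff s g), ?_⟩
  conv_lhs => rw [g.as_sum]
  rw [map_sum, Finset.mul_sum]
  refine Finset.sum_congr rfl fun s hs => ?_
  rw [Polynomial.aeval_monomial, algebraMap_eq, X_pow_eq_monomial, C_mul_monomial, mul_one,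
    monomial_mul, one_mul, ← h s hs, Finsupp.erase_add_single]

variable {K : Type*} [Field K] [CharZero K]

theorem mul_X_pow_natDegree_mem {I : Ideal (MvPolynomial σ K)} {i t : σ} (hti : t ≠ i)
    (hI : ∀ f ∈ I, X t * pderiv i f ∈ I) {u : MvPolynomial σ K} (hu : pderiv i u = 0)
    {P : Polynomial K} (hP : P ≠ 0) (h : u * Polynomial.aeval (X i) P ∈ I) :
    u * X t ^ P.natDegree ∈ I := by
  induction hd : P.natDegree generalizing u P with
  | zero =>
    rw [Polynomial.eq_C_of_natDegree_eq_zero hd, Polynomial.aeval_C, algebraMap_eq] at h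
    have hc : P.coeff 0 ≠ 0 := hd ▸ Polynomial.leadingCoeff_ne_zero.mpr hP
    simpa [hc] using I.mul_mem_right (C (P.coeff 0)⁻¹) h
  | succ d ih =>
    have hstep : (u * X t) * Polynomial.aeval (X i) (derivative P) ∈ I := by
      convert hI _ h using 1
      rw [Derivation.leibniz, Derivation.map_aeval, hu, pderiv_X_self]
      simp only [smul_eq_mul, mul_one, mul_zero, add_zero]
      ring
    have hP' : derivative P ≠ 0 := by
      rw [Ne, Polynomial.derivative_eq_zero, hd]; exact d.succ_ne_zero
    have := ih (by simp [pderiv_X_of_ne hti, hu]) hP' hstep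
      (by rw [Polynomial.natDegree_derivative, hd, Nat.add_sub_cancel])
    rwa [pow_succ, ← mul_assoc, mul_right_comm]

end MvPolynomial

namespace PoissonBracket

variable {σ k : Type*} [CommRing k] [Fintype σ] (B : PoissonBracket k (MvPolynomial σ k))

theorem bracket_eq_sum_pderiv_right (f g : MvPolynomial σ k) :
    B.bracket f g = ∑ i, B.bracket f (X i) * pderiv i g :=
  derivation_eq_sum_pderiv (B.hamiltonian f) g

theorem bracket_eq_sum_pderiv_left (f g : MvPolynomial σ k) :
    B.bracket f g = ∑ i, pderiv i f * B.bracket (X i) g := by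
  rw [B.antisymm, bracket_eq_sum_pderiv_right, ← Finset.sum_neg_distrib]
  refine Finset.sum_congr rfl fun i _ => ?_
  rw [B.antisymm g, neg_mul, neg_neg, mul_comm]

theorem isPoissonIdeal_span {S : Set (MvPolynomial σ k)}
    (h : ∀ g ∈ S, ∀ i, B.bracket (X i) g ∈ Ideal.span S) : IsPoissonIdeal B (Ideal.span S) := by
  intro a x hx
  induction hx using Submodule.span_induction with
  | mem g hg =>
    rw [bracket_eq_sum_pderiv_left]
    exact sum_mem fun i _ => Ideal.mul_mem_left _ _ (h g hg i)
  | zero => rw [← B.hamiltonian_apply, map_zero]; exact zero_mem _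
  | add x y _ _ hx hy => rw [B.add_right]; exact add_mem hx hy
  | smul r x hx ih =>
    rw [smul_eq_mul, B.leibniz]
    exact add_mem (Ideal.mul_mem_left _ _ hx) (Ideal.mul_mem_left _ _ ih)

end PoissonBracket

theorem Irrational.injective_natCast_add_mul_natCast {α : ℝ} (hα : Irrational α) :
    Function.Injective fun w : ℕ × ℕ => (w.1 : ℂ) + α * w.2 := by
  rintro ⟨j, k⟩ ⟨j', k'⟩ h
  have hre : (j : ℝ) + α * k = j' + α * k' := by
    simpa using congrArg Complex.re h
  have hk : k = k' := by
    by_contra hkk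
    have hsub : ((k : ℤ) - k' : ℤ) ≠ 0 := sub_ne_zero.mpr (by exact_mod_cast hkk)
    exact (hα.intCast_mul hsub).ne_int (j' - j) (by push_cast; linarith)
  subst hk
  simp only [add_left_inj, Nat.cast_inj] at hre
  rw [hre]

/-- The Kirillov-Kostant-Souriau bracket of the Lie algebra
`[e₀, e₁] = e₁`, `[e₀, e₂] = α e₂`, `[e₁, e₂] = 0`. -/
structure IsKKSBracket (α : ℝ) (B : PoissonBracket ℂ (MvPolynomial (Fin 3) ℂ)) : Prop where
  bracket_X0_X1 : B.bracket (X 0) (X 1) = X 1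
  bracket_X0_X2 : B.bracket (X 0) (X 2) = C (α : ℂ) * X 2
  bracket_X1_X2 : B.bracket (X 1) (X 2) = 0

/-- Weights for the bidegree in `(x₁, x₂)`, whose components are the eigenspaces of `{x₀, -}`. -/
def bidegree : Fin 3 → ℕ × ℕ := ![0, (1, 0), (0, 1)]

theorem weight_bidegree (s : Fin 3 →₀ ℕ) : Finsupp.weight bidegree s = (s 1, s 2) := by
  simp [Finsupp.weight_apply, Finsupp.sum_fintype, Fin.sum_univ_three, bidegree, Prod.ext_iff]

theorem monomial_erase_zero (m : Fin 3 →₀ ℕ) :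
    monomial (m.erase 0) (1 : ℂ) = X 1 ^ m 1 * X 2 ^ m 2 := by
  have hm : m.erase 0 = Finsupp.single 1 (m 1) + Finsupp.single 2 (m 2) := by
    ext i; fin_cases i <;> simp [Finsupp.erase_ne]
  rw [X_pow_eq_monomial, X_pow_eq_monomial, monomial_mul, one_mul, hm]

namespace IsKKSBracket

variable {α : ℝ} {B : PoissonBracket ℂ (MvPolynomial (Fin 3) ℂ)}

theorem bracket_X0 (hB : IsKKSBracket α B) (f : MvPolynomial (Fin 3) ℂ) :
    B.bracket (X 0) f = X 1 * pderiv 1 f + C (α : ℂ) * (X 2 * pderiv 2 f) := by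
  rw [B.bracket_eq_sum_pderiv_right, Fin.sum_univ_three, B.bracket_self, hB.bracket_X0_X1,
    hB.bracket_X0_X2]
  ring

theorem bracket_X1 (hB : IsKKSBracket α B) (f : MvPolynomial (Fin 3) ℂ) :
    B.bracket (X 1) f = -(X 1 * pderiv 0 f) := by
  rw [B.bracket_eq_sum_pderiv_right, Fin.sum_univ_three, B.antisymm (X 1), hB.bracket_X0_X1,
    B.bracket_self, hB.bracket_X1_X2]
  ring

theorem bracket_X2 (hB : IsKKSBracket α B) (f : MvPolynomial (Fin 3) ℂ) :
    B.bracket (X 2) f = -(C (α : ℂ) * (X 2 * pderiv 0 f)) := by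
  rw [B.bracket_eq_sum_pderiv_right, Fin.sum_univ_three, B.antisymm (X 2), hB.bracket_X0_X2,
    B.antisymm (X 2), hB.bracket_X1_X2, B.bracket_self]
  ring

theorem isPoissonIdeal_span_X1 (hB : IsKKSBracket α B) :
    IsPoissonIdeal B (Ideal.span {(X 1 : MvPolynomial (Fin 3) ℂ)}) :=
  B.isPoissonIdeal_span fun g hg i => by
    obtain rfl := Set.mem_singleton_iff.mp hg
    fin_cases i <;> simp [hB.bracket_X0, hB.bracket_X1, hB.bracket_X2, pderiv_X]

theorem isPoissonIdeal_span_X2 (hB : IsKKSBracket α B) :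
    IsPoissonIdeal B (Ideal.span {(X 2 : MvPolynomial (Fin 3) ℂ)}) :=
  B.isPoissonIdeal_span fun g hg i => by
    obtain rfl := Set.mem_singleton_iff.mp hg
    fin_cases i <;> simp [hB.bracket_X0, hB.bracket_X1, hB.bracket_X2, pderiv_X,
      Ideal.mul_mem_left]

theorem isPoissonIdeal_span_X0_sub_C (hB : IsKKSBracket α B) (a : ℂ) :
    IsPoissonIdeal B (Ideal.span {X 0 - C a, X 1, X 2}) :=
  B.isPoissonIdeal_span fun g hg i => by
    have hX1 : X 1 ∈ Ideal.span {X 0 - C a, X 1, (X 2 : MvPolynomial (Fin 3) ℂ)} :=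
      Ideal.subset_span (by simp)
    have hX2 : X 2 ∈ Ideal.span {X 0 - C a, X 1, (X 2 : MvPolynomial (Fin 3) ℂ)} :=
      Ideal.subset_span (by simp)
    simp only [Set.mem_insert_iff, Set.mem_singleton_iff] at hg
    rcases hg with rfl | rfl | rfl <;> fin_cases i <;>
      simp [hB.bracket_X0, hB.bracket_X1, hB.bracket_X2, pderiv_X, hX1, hX2, Ideal.mul_mem_left]

theorem bracket_X0_weightedHomogeneousComponent (hB : IsKKSBracket α B)
    (f : MvPolynomial (Fin 3) ℂ) (w : ℕ × ℕ) :
    B.bracket (X 0) (weightedHomogeneousComponent bidegree w f) =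
      ((w.1 : ℂ) + α * w.2) • weightedHomogeneousComponent bidegree w f := by
  have hw : ∀ s ∈ (weightedHomogeneousComponent bidegree w f).support, (s 1, s 2) = w :=
    fun s hs => (weight_bidegree s).symm.trans <|
      weightedHomogeneousComponent_isWeightedHomogeneous w f (mem_support_iff.mp hs)
  rw [hB.bracket_X0, X_mul_pderiv_eq_nsmul fun s hs => congrArg Prod.fst (hw s hs),
    X_mul_pderiv_eq_nsmul fun s hs => congrArg Prod.snd (hw s hs)]
  simp only [nsmul_eq_mul, smul_eq_C_mul, map_add, map_mul, map_natCast]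
  ring

theorem weightedHomogeneousComponent_mem (hB : IsKKSBracket α B) (hα : Irrational α)
    {I : Ideal (MvPolynomial (Fin 3) ℂ)} (hI : IsPoissonIdeal B I) {f : MvPolynomial (Fin 3) ℂ}
    (hf : f ∈ I) (w : ℕ × ℕ) : weightedHomogeneousComponent bidegree w f ∈ I := by
  classical
  set s := f.support.image (Finsupp.weight bidegree)
  have hsum : ∑ v ∈ s, weightedHomogeneousComponent bidegree v f = f := by
    rw [← finsum_eq_sum_of_support_subset, sum_weightedHomogeneousComponent]
    intro v hv
    by_contra hvs
    refine hv (weightedHomogeneousComponent_eq_zero' v f fun d hd hdv => hvs ?_)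
    exact Finset.mem_image.mpr ⟨d, hd, hdv⟩
  by_cases hw : w ∈ s
  · exact Submodule.mem_of_sum_mem_of_apply_eq_smul (T := (B.hamiltonian (X 0)).toLinearMap)
      (p := I.restrictScalars ℂ) (fun x hx => hI _ x hx)
      (hα.injective_natCast_add_mul_natCast.injOn)
      (fun v _ => hB.bracket_X0_weightedHomogeneousComponent f v) (by rwa [hsum]) hw
  · rw [weightedHomogeneousComponent_eq_zero']
    · exact zero_mem I
    · exact fun d hd hdw => hw (Finset.mem_image.mpr ⟨d, hd, hdw⟩)

theorem X_mul_pderiv_zero_mem (hB : IsKKSBracket α B) (hα : α ≠ 0)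
    {I : Ideal (MvPolynomial (Fin 3) ℂ)} (hI : IsPoissonIdeal B I) {t : Fin 3} (ht : t ≠ 0)
    {f : MvPolynomial (Fin 3) ℂ} (hf : f ∈ I) : X t * pderiv 0 f ∈ I := by
  have h := hI (X t) f hf
  obtain rfl | rfl : t = 1 ∨ t = 2 := by omega
  · simpa [hB.bracket_X1] using h
  · rw [hB.bracket_X2, neg_mem_iff] at h
    simpa [← mul_assoc, ← map_mul, hα] using I.mul_mem_left (C (α : ℂ)⁻¹) h

theorem exists_X_pow_mul_mem (hB : IsKKSBracket α B) (hα : Irrational α)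
    {I : Ideal (MvPolynomial (Fin 3) ℂ)} (hI : IsPoissonIdeal B I) {f : MvPolynomial (Fin 3) ℂ}
    (hf : f ∈ I) {m : Fin 3 →₀ ℕ} (hm : m ∈ f.support) {t : Fin 3} (ht : t ≠ 0) :
    ∃ n, X 1 ^ m 1 * X 2 ^ m 2 * X t ^ n ∈ I := by
  classical
  set g := weightedHomogeneousComponent bidegree (Finsupp.weight bidegree m) f
  have hsupp : ∀ s ∈ g.support, s.erase 0 = m.erase 0 := by
    intro s hs
    have hw := weightedHomogeneousComponent_isWeightedHomogeneous _ f (mem_support_iff.mp hs)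
    rw [weight_bidegree, weight_bidegree, Prod.mk.injEq] at hw
    ext i; fin_cases i <;> simp [Finsupp.erase_ne, hw.1, hw.2]
  obtain ⟨P, hP⟩ := exists_eq_monomial_mul_aeval hsupp
  have hP0 : P ≠ 0 := by
    rintro rfl
    have hmg : coeff m g ≠ 0 := by
      rwa [coeff_weightedHomogeneousComponent, if_pos rfl, ← mem_support_iff]
    simp [hP] at hmg
  refine ⟨P.natDegree, monomial_erase_zero m ▸ mul_X_pow_natDegree_mem ht
    (fun _ => hB.X_mul_pderiv_zero_mem hα.ne_zero hI ht) ?_ hP0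
    (hP ▸ hB.weightedHomogeneousComponent_mem hα hI hf _)⟩
  simp [pderiv_monomial]

theorem pow_mul_pow_eq_zero_of_le_ker_eval (hB : IsKKSBracket α B) (hα : Irrational α)
    {I : Ideal (MvPolynomial (Fin 3) ℂ)} (hI : IsPoissonIdeal B I) {p : Fin 3 → ℂ}
    (hIp : I ≤ RingHom.ker (eval p)) {t : Fin 3} (ht : t ≠ 0) (hpt : p t ≠ 0)
    {f : MvPolynomial (Fin 3) ℂ} (hf : f ∈ I) {m : Fin 3 →₀ ℕ} (hm : m ∈ f.support) :
    p 1 ^ m 1 * p 2 ^ m 2 = 0 := by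
  obtain ⟨n, hn⟩ := hB.exists_X_pow_mul_mem hα hI hf hm ht
  have h := RingHom.mem_ker.mp (hIp hn)
  simp only [map_mul, map_pow, eval_X] at h
  exact (mul_eq_zero.mp h).resolve_right (pow_ne_zero n hpt)

theorem poissonCore_eq_span_X2 (hB : IsKKSBracket α B) (hα : Irrational α) (a : ℂ) {b : ℂ}
    (hb : b ≠ 0) :
    poissonCore B (Ideal.span {X 0 - C a, X 1 - C b, X 2}) = Ideal.span {X 2} := by
  refine poissonCore_eq_of_forall_le hB.isPoissonIdeal_span_X2 (Ideal.span_mono (by simp))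
    fun I hI hIJ f hf => ?_
  have hIp : I ≤ RingHom.ker (eval ![a, b, 0]) :=
    hIJ.trans (Ideal.span_le.mpr (by simp [Set.insert_subset_iff]))
  rw [← Set.image_singleton, mem_ideal_span_X_image]
  intro m hm
  have h := hB.pow_mul_pow_eq_zero_of_le_ker_eval hα hI hIp one_ne_zero (by simpa using hb) hf hm
  exact ⟨2, rfl, by simpa [hb] using h⟩

theorem poissonCore_eq_span_X1 (hB : IsKKSBracket α B) (hα : Irrational α) (a : ℂ) {c : ℂ}
    (hc : c ≠ 0) :
    poissonCore B (Ideal.span {X 0 - C a, X 1, X 2 - C c}) = Ideal.span {X 1} := by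
  refine poissonCore_eq_of_forall_le hB.isPoissonIdeal_span_X1 (Ideal.span_mono (by simp))
    fun I hI hIJ f hf => ?_
  have hIp : I ≤ RingHom.ker (eval ![a, 0, c]) :=
    hIJ.trans (Ideal.span_le.mpr (by simp [Set.insert_subset_iff]))
  rw [← Set.image_singleton, mem_ideal_span_X_image]
  intro m hm
  have h := hB.pow_mul_pow_eq_zero_of_le_ker_eval hα hI hIp (t := 2) (by decide)
    (by simpa using hc) hf hm
  exact ⟨1, rfl, by simpa [hc] using h⟩

theorem poissonCore_eq_bot (hB : IsKKSBracket α B) (hα : Irrational α) (a : ℂ) {b c : ℂ}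
    (hb : b ≠ 0) (hc : c ≠ 0) :
    poissonCore B (Ideal.span {X 0 - C a, X 1 - C b, X 2 - C c}) = ⊥ := by
  refine poissonCore_eq_of_forall_le isPoissonIdeal_bot bot_le fun I hI hIJ f hf => ?_
  have hIp : I ≤ RingHom.ker (eval ![a, b, c]) :=
    hIJ.trans (Ideal.span_le.mpr (by simp [Set.insert_subset_iff]))
  rw [Ideal.mem_bot, ← support_eq_empty, Finset.eq_empty_iff_forall_notMem]
  intro m hm
  have h := hB.pow_mul_pow_eq_zero_of_le_ker_eval hα hI hIp one_ne_zero (by simpa using hb) hf hm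
  simp [hb, hc] at h

end IsKKSBracket

open MvPolynomial in
/-- the Poisson cores of the maximal ideals of `ℂ[x₁,x₂,x₃]` with the
Kirillov-Kostant-Souriau bracket `{x₁,x₂} = x₂`, `{x₁,x₃} = αx₃`, `{x₂,x₃} = 0` for an
irrational real `α`. -/
theorem poisson_cores_nonalgebraic_solvable (α : ℝ) (hα : Irrational α)
    (B : PoissonBracket ℂ (MvPolynomial (Fin 3) ℂ))
    (h12 : B.bracket (X 0) (X 1) = X 1)
    (h13 : B.bracket (X 0) (X 2) = C (α : ℂ) * X 2)
    (h23 : B.bracket (X 1) (X 2) = 0) :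
    (∀ a : ℂ, poissonCore B (Ideal.span {X 0 - C a, X 1, X 2}) =
      Ideal.span {X 0 - C a, X 1, X 2}) ∧
    (∀ a b : ℂ, b ≠ 0 → poissonCore B (Ideal.span {X 0 - C a, X 1 - C b, X 2}) =
      Ideal.span {(X 2 : MvPolynomial (Fin 3) ℂ)}) ∧
    (∀ a c : ℂ, c ≠ 0 → poissonCore B (Ideal.span {X 0 - C a, X 1, X 2 - C c}) =
      Ideal.span {(X 1 : MvPolynomial (Fin 3) ℂ)}) ∧
    (∀ a b c : ℂ, b ≠ 0 → c ≠ 0 →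
      poissonCore B (Ideal.span {X 0 - C a, X 1 - C b, X 2 - C c}) = ⊥) := by
  have hB : IsKKSBracket α B := ⟨h12, h13, h23⟩
  exact ⟨fun a => poissonCore_eq_self (hB.isPoissonIdeal_span_X0_sub_C a),
    fun a _ hb => hB.poissonCore_eq_span_X2 hα a hb,
    fun a _ hc => hB.poissonCore_eq_span_X1 hα a hc,
    fun a _ _ hb hc => hB.poissonCore_eq_bot hα a hb hc⟩
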